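/- There exists a unique continuous function f : [0,1] → ℂ satisfying f(x) = αf(2x) for 0 ≤ x < 1/2 and f(x) = (1-α)f(2x-1) + α for 1/2 ≤ x ≤ 1, where α = (1-i)/2. -/

import Mathlib

open Complex

noncomputable def α : ℂ := (1 - I) / 2

namespace DragonAux

lemma alpha_ne_one : α ≠ 1 := by
  intro h
  rw [α, div_eq_one_iff_eq (two_ne_zero)] at h
  have := congrArg Complex.im h
  simp at this

lemma alpha_ne_zero : α ≠ 0 := by
  intro h
  rw [α, div_eq_zero_iff] at h
  rcases h with h | h
  · have := congrArg Complex.im h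
    simp at this
  · exact two_ne_zero h

lemma abs_alpha : ‖α‖ = Real.sqrt (1/2) := by
  have : Complex.normSq α = 1/2 := by
    simp [α, Complex.normSq_apply, Complex.div_re, Complex.div_im, Complex.normSq_apply]
    norm_num
  rw [Complex.norm_def, this]

lemma abs_one_sub_alpha : ‖1 - α‖ = Real.sqrt (1/2) := by
  have : Complex.normSq (1 - α) = 1/2 := by
    simp [α, Complex.normSq_apply, Complex.sub_re, Complex.sub_im, Complex.div_re,
      Complex.div_im, Complex.normSq_apply]
    norm_num
  rw [Complex.norm_def, this]

abbrev I01 := Set.Icc (0 : ℝ) 1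

noncomputable def K : NNReal := ⟨Real.sqrt (1/2), Real.sqrt_nonneg _⟩

lemma K_lt_one : K < 1 := by
  rw [← NNReal.coe_lt_coe]
  show Real.sqrt (1/2) < 1
  rw [show (1:ℝ) = Real.sqrt 1 by simp]
  exact Real.sqrt_lt_sqrt (by norm_num) (by norm_num)

def u (x : I01) : I01 :=
  ⟨min (2 * x.1) 1, ⟨le_min (by have := x.2.1; linarith) one_pos.le, min_le_right _ _⟩⟩

def v (x : I01) : I01 :=
  ⟨max (2 * x.1 - 1) 0, ⟨le_max_right _ _,
    max_le (by have := x.2.2; linarith) one_pos.le⟩⟩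

lemma continuous_u : Continuous u := by
  apply Continuous.subtype_mk
  exact (continuous_const.mul continuous_subtype_val).min continuous_const

lemma continuous_v : Continuous v := by
  apply Continuous.subtype_mk
  exact ((continuous_const.mul continuous_subtype_val).sub continuous_const).max continuous_const

abbrev X := C(I01, ℂ)

def S : Set X := {f | f ⟨0, by norm_num⟩ = 0 ∧ f ⟨1, by norm_num⟩ = 1}

lemma isClosed_S : IsClosed S :=
  (isClosed_singleton.preimage (continuous_eval_const _)).inter
    (isClosed_singleton.preimage (continuous_eval_const _))

instance : CompleteSpace S := isClosed_S.completeSpace_coe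

instance : Nonempty S :=
  ⟨⟨⟨fun x => (x.1 : ℂ), Complex.continuous_ofReal.comp continuous_subtype_val⟩,
    by simp, by simp⟩⟩

noncomputable def Tfun (f : X) : I01 → ℂ :=
  fun x => if x.1 ≤ 1/2 then α * f (u x) else (1 - α) * f (v x) + α

lemma Tfun_continuous (f : S) : Continuous (Tfun f.1) := by
  apply Continuous.if_le
  · exact continuous_const.mul (f.1.continuous.comp continuous_u)
  · exact (continuous_const.mul (f.1.continuous.comp continuous_v)).add continuous_const
  · exact continuous_subtype_val
  · exact continuous_const
  · intro x hx
    have hu : u x = ⟨1, by norm_num⟩ := by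
      apply Subtype.ext; show min (2 * x.1) 1 = 1; rw [hx]; norm_num
    have hv : v x = ⟨0, by norm_num⟩ := by
      apply Subtype.ext; show max (2 * x.1 - 1) 0 = 0; rw [hx]; norm_num
    rw [hu, hv, f.2.1, f.2.2]
    ring

noncomputable def T (f : S) : S :=
  ⟨⟨Tfun f.1, Tfun_continuous f⟩, by
    constructor
    · show Tfun f.1 ⟨0, _⟩ = 0
      have hu : u ⟨0, by norm_num⟩ = ⟨0, by norm_num⟩ := by
        apply Subtype.ext; show min (2 * (0:ℝ)) 1 = 0; norm_num
      simp only [Tfun]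
      rw [if_pos (by norm_num), hu, f.2.1]
      ring
    · show Tfun f.1 ⟨1, _⟩ = 1
      have hv : v ⟨1, by norm_num⟩ = ⟨1, by norm_num⟩ := by
        apply Subtype.ext; show max (2 * (1:ℝ) - 1) 0 = 1; norm_num
      simp only [Tfun]
      rw [if_neg (by norm_num), hv, f.2.2]
      ring⟩

lemma contracting : ContractingWith K T := by
  refine ⟨K_lt_one, LipschitzWith.of_dist_le_mul fun f g => ?_⟩
  rw [Subtype.dist_eq, ContinuousMap.dist_le (by positivity)]
  intro x
  show dist (Tfun f.1 x) (Tfun g.1 x) ≤ K * dist f g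
  have hdfg : dist (f : S) g = dist f.1 g.1 := Subtype.dist_eq f g
  simp only [Tfun]
  split_ifs with h
  · rw [dist_eq_norm, ← mul_sub, norm_mul]
    have : ‖α‖ = Real.sqrt (1/2) := abs_alpha
    rw [this, ← dist_eq_norm, hdfg]
    exact mul_le_mul_of_nonneg_left (ContinuousMap.dist_apply_le_dist _)
      (Real.sqrt_nonneg _)
  · rw [dist_add_right, dist_eq_norm, ← mul_sub, norm_mul]
    have : ‖1 - α‖ = Real.sqrt (1/2) := abs_one_sub_alpha
    rw [this, ← dist_eq_norm, hdfg]
    exact mul_le_mul_of_nonneg_left (ContinuousMap.dist_apply_le_dist _)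
      (Real.sqrt_nonneg _)

end DragonAux

open DragonAux in
theorem exists_unique_f :
    ∃! f : Set.Icc (0 : ℝ) 1 → ℂ, Continuous f ∧
      (∀ x : ℝ, (hx0 : 0 ≤ x) → (hx : x < 1 / 2) →
        f ⟨x, by constructor <;> linarith⟩ =
          α * f ⟨2 * x, by constructor <;> linarith⟩) ∧
      (∀ x : ℝ, (hx0 : 1 / 2 ≤ x) → (hx : x ≤ 1) →
        f ⟨x, by constructor <;> linarith⟩ =
          (1 - α) * f ⟨2 * x - 1, by constructor <;> linarith⟩ + α) := by
  classical
  set φ : S := ContractingWith.fixedPoint T contracting with hφdef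
  have hfix : T φ = φ := contracting.fixedPoint_isFixedPt
  have e : (⇑φ.1 : I01 → ℂ) = Tfun φ.1 :=
    congrArg (fun s : ↥S => (⇑s.1 : I01 → ℂ)) hfix.symm
  refine ⟨⇑φ.1, ⟨φ.1.continuous, ?_, ?_⟩, ?_⟩
  · -- first functional equation
    intro x hx0 hx
    conv_lhs => rw [e]
    show Tfun φ.1 ⟨x, _⟩ = _
    have hu : u ⟨x, by constructor <;> linarith⟩ = ⟨2 * x, by constructor <;> linarith⟩ := by
      apply Subtype.ext; show min (2 * x) 1 = 2 * x
      exact min_eq_left (by linarith)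
    simp only [Tfun]
    rw [if_pos (show x ≤ 1/2 by linarith), hu]
  · -- second functional equation
    intro x hx0 hx
    conv_lhs => rw [e]
    show Tfun φ.1 ⟨x, _⟩ = _
    rcases lt_or_eq_of_le hx0 with h | h
    · have hv : v ⟨x, by constructor <;> linarith⟩
          = ⟨2 * x - 1, by constructor <;> linarith⟩ := by
        apply Subtype.ext; show max (2 * x - 1) 0 = 2 * x - 1
        exact max_eq_left (by linarith)
      simp only [Tfun]
      rw [if_neg (show ¬ (x ≤ 1/2) from not_le.mpr h), hv]
    · -- x = 1/2
      have hu : u ⟨x, by constructor <;> linarith⟩ = ⟨1, by norm_num⟩ := by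
        apply Subtype.ext; show min (2 * x) 1 = 1; rw [← h]; norm_num
      have hv2 : (⟨2 * x - 1, by constructor <;> linarith⟩ : I01) = ⟨0, by norm_num⟩ := by
        apply Subtype.ext; show 2 * x - 1 = 0; rw [← h]; norm_num
      simp only [Tfun]
      rw [if_pos (le_of_eq h.symm), hu, φ.2.2, hv2, φ.2.1]
      ring
  · -- uniqueness
    rintro g ⟨hgc, hg1, hg2⟩
    have h0eq : (⟨2 * 0, by constructor <;> linarith⟩ : I01) = ⟨0, by norm_num⟩ := by
      apply Subtype.ext; norm_num
    have hg0 : g ⟨0, by norm_num⟩ = 0 := by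
      have h1 := hg1 0 le_rfl (by norm_num)
      rw [h0eq] at h1
      have h2 : (1 - α) * g ⟨0, by norm_num⟩ = 0 := by
        rw [sub_mul, one_mul, sub_eq_zero]; exact h1
      rcases mul_eq_zero.mp h2 with h | h
      · exact absurd (sub_eq_zero.mp h).symm alpha_ne_one
      · exact h
    have h1eq : (⟨2 * 1 - 1, by constructor <;> linarith⟩ : I01) = ⟨1, by norm_num⟩ := by
      apply Subtype.ext; norm_num
    have hgone : g ⟨1, by norm_num⟩ = 1 := by
      have h1 := hg2 1 (by norm_num) le_rfl
      rw [h1eq] at h1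
      have h2 : α * g ⟨1, by norm_num⟩ = α * 1 := by
        rw [mul_one]; linear_combination h1
      exact mul_left_cancel₀ alpha_ne_zero h2
    set G : ↥S := ⟨⟨g, hgc⟩, hg0, hgone⟩ with hGdef
    have hGfix : Function.IsFixedPt T G := by
      show T G = G
      apply Subtype.ext
      apply ContinuousMap.ext
      intro x
      show Tfun (⟨g, hgc⟩ : X) x = g x
      simp only [Tfun]
      split_ifs with h
      · rcases lt_or_eq_of_le h with h' | h'
        · have hu : u x = ⟨2 * x.1, ⟨by have := x.2.1; linarith, by linarith⟩⟩ := by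
            apply Subtype.ext; show min (2 * x.1) 1 = 2 * x.1
            exact min_eq_left (by linarith)
          rw [hu]
          exact (hg1 x.1 x.2.1 h').symm
        · -- x.1 = 1/2
          have hu : u x = ⟨1, by norm_num⟩ := by
            apply Subtype.ext; show min (2 * x.1) 1 = 1; rw [h']; norm_num
          rw [hu]
          show α * g ⟨1, by norm_num⟩ = g x
          rw [hgone, mul_one]
          calc α = (1 - α) * g ⟨0, by norm_num⟩ + α := by rw [hg0]; ring
            _ = (1 - α) * g ⟨2 * x.1 - 1, by constructor <;> rw [h'] <;> norm_num⟩ + α := by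
                congr 2
                exact congrArg g (Subtype.ext (show (0:ℝ) = 2 * x.1 - 1 by rw [h']; norm_num))
            _ = g ⟨x.1, x.2⟩ := (hg2 x.1 (le_of_eq h'.symm) (by rw [h']; norm_num)).symm
            _ = g x := rfl
      · push_neg at h
        have hv : v x = ⟨2 * x.1 - 1, ⟨by linarith, by have := x.2.2; linarith⟩⟩ := by
          apply Subtype.ext; show max (2 * x.1 - 1) 0 = 2 * x.1 - 1
          exact max_eq_left (by linarith)
        rw [hv]
        exact (hg2 x.1 h.le x.2.2).symm
    have hGφ : G = φ := contracting.fixedPoint_unique hGfix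
    have := congrArg (fun s : ↥S => (⇑s.1 : I01 → ℂ)) hGφ
    exact this
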